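/- Consider a finite recurrent MDP on S that is skip-free in the negative direction on the tree. Let d be a stationary deterministic policy with average cost g(d), set x = g(d), and let d¹ be the policy of the x-revised first-return problem: d¹(i) = a_i for i ≠ 0, where a_i and y_i come from the downward recursion y_i = min_{a∈A} (c_i(a) − x + ∑_{k∈D(i)} p̄_{ik}(a) y_k)/p_{iρ(i)}(a) with a_i attaining the minimum, and d¹(0) = argmin_{a∈A} (c_0(a) − x + ∑_{k∈D(0)} p̄_{0k}(a) y_k)/(1 − p_{00}(a)). If g(d¹) = g(d), then d¹ is an optimal policy for the average cost problem: g(d¹) = min over all stationary deterministic policies d' of g(d'); moreover the pair (g(d), h), where h_0 = 0 and h_j = ∑_{k∈Δ(0,j)} y_k for j ≠ 0, satisfies the average cost optimality equations h_i = min_{a∈A} { c_i(a) − g + ∑_{j∈S} p_{ij}(a) h_j }. -/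
import Mathlib


open Finset Filter

noncomputable section

/-- A rooted tree structure on a state space `S`: a root, a parent map fixing the root,
such that iterating the parent map from any state reaches the root. -/
structure SFTree (S : Type*) where
  root : S
  parent : S → S
  parent_root : parent root = root
  reaches_root : ∀ i : S, ∃ n : ℕ, parent^[n] i = root

namespace SFTree

variable {S : Type*} [Fintype S] [DecidableEq S]

open Classical in
/-- The set of descendants of `i`: states `j ≠ i` whose path to the root passes through `i`. -/
def desc (T : SFTree S) (i : S) : Finset S :=
  Finset.univ.filter fun j => j ≠ i ∧ ∃ n : ℕ, T.parent^[n] j = i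

open Classical in
/-- The subtree rooted at `i`: `i` together with its descendants. -/
def subtree (T : SFTree S) (i : S) : Finset S :=
  Finset.univ.filter fun j => ∃ n : ℕ, T.parent^[n] j = i

open Classical in
/-- The states strictly after `i` on the path from `i` to `j`. -/
def delta (T : SFTree S) (i j : S) : Finset S :=
  Finset.univ.filter fun r =>
    r ≠ i ∧ (∃ n : ℕ, T.parent^[n] j = r) ∧ (∃ m : ℕ, T.parent^[m] r = i)

end SFTree

/-- A finite Markov decision process: costs and transition probabilities. -/
structure MDP (S A : Type*) [Fintype S] where
  c : S → A → ℝ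
  p : S → A → S → ℝ
  p_nonneg : ∀ i a j, 0 ≤ p i a j
  p_sum_one : ∀ i a, ∑ j, p i a j = 1

namespace MDP

variable {S A : Type*} [Fintype S] [DecidableEq S]

/-- Tail probability: the probability of jumping from `i` into the subtree rooted at `k`. -/
def ptail (M : MDP S A) (T : SFTree S) (i : S) (a : A) (k : S) : ℝ :=
  ∑ s ∈ T.subtree k, M.p i a s

/-- Skip-free in the negative direction on the tree `T`: from `i ≠ root` the only possible
transitions are to the parent of `i` or into the subtree rooted at `i`. -/
def IsSkipFree (M : MDP S A) (T : SFTree S) : Prop :=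
  ∀ i, i ≠ T.root → ∀ a j, M.p i a j ≠ 0 → j = T.parent i ∨ j ∈ T.subtree i

/-- Transition matrix of the stationary deterministic policy `d`. -/
def Pmat (M : MDP S A) (d : S → A) : Matrix S S ℝ :=
  Matrix.of fun i j => M.p i (d i) j

/-- Cost vector of the stationary deterministic policy `d`. -/
def cvec (M : MDP S A) (d : S → A) : S → ℝ := fun i => M.c i (d i)

/-- Expected average cost of the stationary deterministic policy `d` starting from `i`. -/
def avgCost (M : MDP S A) (d : S → A) (i : S) : ℝ :=
  Filter.limsup
    (fun n : ℕ => (n : ℝ)⁻¹ * ∑ t ∈ Finset.range n, ((M.Pmat d ^ t).mulVec (M.cvec d)) i)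
    Filter.atTop

end MDP

/-- A (substochastic) matrix is irreducible if every state can reach every other state
in a positive number of steps. -/
def MatIrreducible {S : Type*} [Fintype S] [DecidableEq S] (P : Matrix S S ℝ) : Prop :=
  ∀ i j, ∃ n : ℕ, 0 < n ∧ 0 < (P ^ n) i j

/-- A recurrent model: every stationary deterministic policy has an irreducible
transition matrix. -/
def IsRecurrentModel {S A : Type*} [Fintype S] [DecidableEq S] (M : MDP S A) : Prop :=
  ∀ d : S → A, MatIrreducible (M.Pmat d)

/-- The probability weight of a path of length `n`. -/
def pathWt {S : Type*} [Fintype S] (P : Matrix S S ℝ) {n : ℕ} (x : Fin (n + 1) → S) : ℝ :=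
  ∏ t : Fin n, P (x t.castSucc) (x t.succ)

open Classical in
/-- `E[f(X_n); τ > n]` for the chain with matrix `P` started at `z`, where `τ` is the
first-return epoch to `z` (the first time the chain enters `z` from a state `≠ z`). -/
def retTerm {S : Type*} [Fintype S] (P : Matrix S S ℝ) (z : S) (f : S → ℝ) (n : ℕ) : ℝ :=
  ∑ x ∈ Finset.univ.filter
      (fun (x : Fin (n + 1) → S) =>
        x 0 = z ∧ ∀ t : Fin n, ¬(x t.castSucc ≠ z ∧ x t.succ = z)),
    pathWt P x * f (x (Fin.last n))

/-- `E[∑_{t=0}^{τ-1} f(X_t)]` for the chain with matrix `P` started at `z`, where `τ` is the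
first-return epoch to `z`. -/
def retSum {S : Type*} [Fintype S] (P : Matrix S S ℝ) (z : S) (f : S → ℝ) : ℝ :=
  ∑' n : ℕ, retTerm P z f n

open Classical in
/-- `E[f(X_n); σ > n]` for the chain with matrix `P` started at `i`, where `σ` is the
first-passage epoch to `z`, `σ = min {t > 0 : X_t = z}`. -/
def passTerm {S : Type*} [Fintype S] (P : Matrix S S ℝ) (i z : S) (f : S → ℝ) (n : ℕ) : ℝ :=
  ∑ x ∈ Finset.univ.filter
      (fun (x : Fin (n + 1) → S) => x 0 = i ∧ ∀ t : Fin n, x t.succ ≠ z),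
    pathWt P x * f (x (Fin.last n))

/-- `E[∑_{t=0}^{σ-1} f(X_t)]` for the chain with matrix `P` started at `i`, where `σ` is the
first-passage epoch to `z`. -/
def passSum {S : Type*} [Fintype S] (P : Matrix S S ℝ) (i z : S) (f : S → ℝ) : ℝ :=
  ∑' n : ℕ, passTerm P i z f n

end

set_option linter.unusedSectionVars false

namespace SFTree

variable {S : Type*} [Fintype S] [DecidableEq S]

lemma iterate_root (T : SFTree S) (n : ℕ) : T.parent^[n] T.root = T.root := by
  induction n with
  | zero => rfl
  | succ n ih => rw [Function.iterate_succ_apply, T.parent_root, ih]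

lemma no_cycle (T : SFTree S) {i : S} (hi : i ≠ T.root) {n : ℕ} (hn : 0 < n)
    (h : T.parent^[n] i = i) : False := by
  obtain ⟨N, hN⟩ := T.reaches_root i
  have hmul : ∀ t : ℕ, T.parent^[n * t] i = i := by
    intro t
    induction t with
    | zero => rfl
    | succ t ih => rw [Nat.mul_succ, Function.iterate_add_apply, h, ih]
  have habs : ∀ k : ℕ, T.parent^[k + N] i = T.root := by
    intro k; rw [Function.iterate_add_apply, hN, iterate_root]
  have h1 : n * (N + 1) = (n * (N + 1) - N) + N := by
    have : N ≤ n * (N + 1) := le_trans (Nat.le_succ N) (Nat.le_mul_of_pos_left _ hn)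
    omega
  have := hmul (N + 1)
  rw [h1, habs] at this
  exact hi this.symm

lemma anc_antisymm (T : SFTree S) {i k : S} (hi : i ≠ T.root)
    (h1 : ∃ n, T.parent^[n] k = i) (h2 : ∃ m, T.parent^[m] i = k) : i = k := by
  obtain ⟨n, hn⟩ := h1; obtain ⟨m, hm⟩ := h2
  rcases Nat.eq_zero_or_pos (n + m) with h0 | hpos
  · have : m = 0 := by omega
    rw [this] at hm; simpa using hm
  · have hcyc : T.parent^[n + m] i = i := by
      rw [Function.iterate_add_apply, hm, hn]
    exact absurd hcyc (fun hh => (T.no_cycle hi hpos hh).elim)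

lemma anc_comparable (T : SFTree S) {i k j : S}
    (h1 : ∃ n, T.parent^[n] j = i) (h2 : ∃ m, T.parent^[m] j = k) :
    (∃ t, T.parent^[t] k = i) ∨ (∃ t, T.parent^[t] i = k) := by
  obtain ⟨n, hn⟩ := h1; obtain ⟨m, hm⟩ := h2
  rcases le_total n m with h | h
  · right
    refine ⟨m - n, ?_⟩
    rw [← hn, ← Function.iterate_add_apply]
    rw [Nat.sub_add_cancel h, hm]
  · left
    refine ⟨n - m, ?_⟩
    rw [← hm, ← Function.iterate_add_apply]
    rw [Nat.sub_add_cancel h, hn]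

lemma mem_subtree {T : SFTree S} {i j : S} :
    j ∈ T.subtree i ↔ ∃ n, T.parent^[n] j = i := by
  simp [subtree]

lemma mem_desc {T : SFTree S} {i j : S} :
    j ∈ T.desc i ↔ j ≠ i ∧ ∃ n, T.parent^[n] j = i := by
  simp [desc]

lemma mem_delta {T : SFTree S} {i j r : S} :
    r ∈ T.delta i j ↔ r ≠ i ∧ (∃ n, T.parent^[n] j = r) ∧ (∃ m, T.parent^[m] r = i) := by
  simp [delta]

lemma self_mem_subtree (T : SFTree S) (i : S) : i ∈ T.subtree i :=
  mem_subtree.2 ⟨0, rfl⟩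

lemma subtree_root (T : SFTree S) : T.subtree T.root = Finset.univ := by
  ext j; simp [mem_subtree, T.reaches_root j]

lemma parent_notMem_subtree (T : SFTree S) {i : S} (hi : i ≠ T.root) :
    T.parent i ∉ T.subtree i := by
  intro h
  obtain ⟨n, hn⟩ := mem_subtree.1 h
  exact T.no_cycle hi (Nat.succ_pos n) (by rwa [Function.iterate_succ_apply])

lemma delta_root_root (T : SFTree S) : T.delta T.root T.root = ∅ := by
  ext r
  simp only [mem_delta, Finset.notMem_empty, iff_false]
  rintro ⟨hr, ⟨n, hn⟩, -⟩
  exact hr (by rw [← hn, iterate_root])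

lemma notMem_delta_root_parent (T : SFTree S) {i : S} (hi : i ≠ T.root) :
    i ∉ T.delta T.root (T.parent i) := by
  intro h
  obtain ⟨-, hanc, -⟩ := mem_delta.1 h
  exact T.no_cycle hi (by omega : 0 < (Classical.choose hanc) + 1) (by
    rw [Function.iterate_succ_apply]
    exact Classical.choose_spec hanc)

lemma delta_root_eq_insert (T : SFTree S) {i : S} (hi : i ≠ T.root) :
    T.delta T.root i = insert i (T.delta T.root (T.parent i)) := by
  ext r
  simp only [mem_delta, Finset.mem_insert]
  constructor
  · rintro ⟨hr, ⟨n, hn⟩, hroot⟩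
    rcases eq_or_ne r i with h | h
    · exact Or.inl h
    · refine Or.inr ⟨hr, ⟨n - 1, ?_⟩, hroot⟩
      have hn0 : n ≠ 0 := by rintro rfl; exact h hn.symm
      rw [← Function.iterate_succ_apply, Nat.succ_eq_add_one, Nat.sub_add_cancel (by omega)]
      exact hn
  · rintro (h | ⟨hr, ⟨n, hn⟩, hroot⟩)
    · subst h; exact ⟨hi, ⟨0, rfl⟩, T.reaches_root _⟩
    · exact ⟨hr, ⟨n + 1, by rwa [Function.iterate_succ_apply]⟩, hroot⟩

/-- For `j` in the subtree of `i` (`i ≠ root`), `Δ(root,j) = Δ(root,i) ⊎ Δ(i,j)`. -/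
lemma delta_root_split (T : SFTree S) {i j : S} (hi : i ≠ T.root)
    (hij : ∃ n, T.parent^[n] j = i) :
    T.delta T.root j = T.delta T.root i ∪ T.delta i j ∧
      Disjoint (T.delta T.root i) (T.delta i j) := by
  constructor
  · ext k
    simp only [mem_delta, Finset.mem_union]
    constructor
    · rintro ⟨hk, hkj, hrootk⟩
      rcases T.anc_comparable hij hkj with h | h
      ·
        rcases eq_or_ne k i with rfl | hne
        · exact Or.inl ⟨hk, ⟨0, rfl⟩, hrootk⟩
        · exact Or.inr ⟨hne, hkj, h⟩
      · exact Or.inl ⟨hk, h, hrootk⟩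
    · rintro (⟨hk, hki, hrootk⟩ | ⟨hk, hkj, hik⟩)
      · obtain ⟨t, ht⟩ := hki
        obtain ⟨n, hn⟩ := hij
        exact ⟨hk, ⟨t + n, by rw [Function.iterate_add_apply, hn, ht]⟩, hrootk⟩
      · refine ⟨?_, hkj, ?_⟩
        · rintro rfl
          obtain ⟨m, hm⟩ := hik
          exact hi (by rw [← hm, iterate_root])
        · exact T.reaches_root k
  · rw [Finset.disjoint_left]
    intro k hk1 hk2
    obtain ⟨-, hki, -⟩ := mem_delta.1 hk1
    obtain ⟨hkne, -, hik⟩ := mem_delta.1 hk2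
    exact hkne (T.anc_antisymm hi hik hki).symm |>.elim

lemma delta_eq_filter (T : SFTree S) (i j : S) :
    T.delta i j = (T.desc i).filter (fun k => j ∈ T.subtree k) := by
  ext k
  simp only [mem_delta, Finset.mem_filter, mem_desc, mem_subtree]
  tauto

lemma subtree_filter_eq (T : SFTree S) {i k : S} (hk : k ∈ T.desc i) :
    (T.subtree i).filter (fun j => j ∈ T.subtree k) = T.subtree k := by
  obtain ⟨-, hik⟩ := mem_desc.1 hk
  ext j
  simp only [Finset.mem_filter, mem_subtree]
  constructor
  · rintro ⟨-, h⟩; exact h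
  · rintro ⟨n, hn⟩
    obtain ⟨m, hm⟩ := hik
    exact ⟨⟨n + m, by rw [← hm, ← hn, ← Function.iterate_add_apply]; ring_nf⟩, ⟨n, hn⟩⟩

end SFTree

namespace MDP

variable {S A : Type*} [Fintype S] [DecidableEq S]

lemma sum_subtree_delta (M : MDP S A) (T : SFTree S) (y : S → ℝ) (i : S) (a : A) :
    ∑ j ∈ T.subtree i, M.p i a j * (∑ k ∈ T.delta i j, y k)
      = ∑ k ∈ T.desc i, M.ptail T i a k * y k := by
  calc ∑ j ∈ T.subtree i, M.p i a j * ∑ k ∈ T.delta i j, y k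
      = ∑ j ∈ T.subtree i, ∑ k ∈ T.desc i,
          (if j ∈ T.subtree k then M.p i a j * y k else 0) := by
        refine Finset.sum_congr rfl fun j _ => ?_
        rw [T.delta_eq_filter i j, Finset.sum_filter, Finset.mul_sum]
        refine Finset.sum_congr rfl fun k _ => ?_
        split <;> simp
    _ = ∑ k ∈ T.desc i, ∑ j ∈ T.subtree i,
          (if j ∈ T.subtree k then M.p i a j * y k else 0) := Finset.sum_comm
    _ = ∑ k ∈ T.desc i, M.ptail T i a k * y k := by
        refine Finset.sum_congr rfl fun k hk => ?_
        rw [← Finset.sum_filter, T.subtree_filter_eq hk, ptail, Finset.sum_mul]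

lemma sum_eq_parent_add_subtree (M : MDP S A) (T : SFTree S) (hsf : M.IsSkipFree T)
    {i : S} (hi : i ≠ T.root) (a : A) (v : S → ℝ) :
    ∑ j, M.p i a j * v j
      = M.p i a (T.parent i) * v (T.parent i) + ∑ j ∈ T.subtree i, M.p i a j * v j := by
  rw [← Finset.sum_subset (Finset.subset_univ (insert (T.parent i) (T.subtree i)))
    (fun j _ hj => ?_), Finset.sum_insert (T.parent_notMem_subtree hi)]
  simp only [Finset.mem_insert, not_or] at hj
  rcases eq_or_ne (M.p i a j) 0 with h | h
  · rw [h, zero_mul]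
  · rcases hsf i hi a j h with h' | h' <;> tauto

lemma subtree_row_sum (M : MDP S A) (T : SFTree S) (hsf : M.IsSkipFree T)
    {i : S} (hi : i ≠ T.root) (a : A) :
    ∑ j ∈ T.subtree i, M.p i a j = 1 - M.p i a (T.parent i) := by
  have h1 := M.p_sum_one i a
  have h2 := M.sum_eq_parent_add_subtree T hsf hi a (fun _ => 1)
  simp only [mul_one] at h2
  linarith

lemma Edecomp (M : MDP S A) (T : SFTree S) (hsf : M.IsSkipFree T) (y : S → ℝ)
    {i : S} (hi : i ≠ T.root) (a : A) :
    ∑ j, M.p i a j * (∑ k ∈ T.delta T.root j, y k)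
      = M.p i a (T.parent i) * (∑ k ∈ T.delta T.root (T.parent i), y k)
        + (1 - M.p i a (T.parent i)) * (∑ k ∈ T.delta T.root i, y k)
        + ∑ k ∈ T.desc i, M.ptail T i a k * y k := by
  rw [M.sum_eq_parent_add_subtree T hsf hi a, add_assoc]
  congr 1
  have hsplit : ∀ j ∈ T.subtree i,
      (∑ k ∈ T.delta T.root j, y k)
        = (∑ k ∈ T.delta T.root i, y k) + ∑ k ∈ T.delta i j, y k := by
    intro j hj
    obtain ⟨heq, hdisj⟩ := T.delta_root_split hi (SFTree.mem_subtree.1 hj)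
    rw [heq, Finset.sum_union hdisj]
  calc ∑ j ∈ T.subtree i, M.p i a j * ∑ k ∈ T.delta T.root j, y k
      = ∑ j ∈ T.subtree i,
          (M.p i a j * (∑ k ∈ T.delta T.root i, y k) + M.p i a j * ∑ k ∈ T.delta i j, y k) := by
        refine Finset.sum_congr rfl fun j hj => ?_
        rw [hsplit j hj, mul_add]
    _ = (∑ j ∈ T.subtree i, M.p i a j) * (∑ k ∈ T.delta T.root i, y k)
          + ∑ j ∈ T.subtree i, M.p i a j * ∑ k ∈ T.delta i j, y k := by
        rw [Finset.sum_add_distrib, Finset.sum_mul]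
    _ = (1 - M.p i a (T.parent i)) * (∑ k ∈ T.delta T.root i, y k)
          + ∑ k ∈ T.desc i, M.ptail T i a k * y k := by
        rw [M.subtree_row_sum T hsf hi a, M.sum_subtree_delta T y i a]

lemma Edecomp_root (M : MDP S A) (T : SFTree S) (y : S → ℝ) (a : A) :
    ∑ j, M.p T.root a j * (∑ k ∈ T.delta T.root j, y k)
      = ∑ k ∈ T.desc T.root, M.ptail T T.root a k * y k := by
  have h := M.sum_subtree_delta T y T.root a
  rwa [T.subtree_root] at h

end MDP

section MatAux

variable {S : Type*} [Fintype S] [DecidableEq S]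

lemma pow_entry_nonneg {P : Matrix S S ℝ} (hP : ∀ i j, 0 ≤ P i j) (n : ℕ) (i j : S) :
    0 ≤ (P ^ n) i j := by
  induction n generalizing i j with
  | zero => rw [pow_zero]; by_cases h : i = j <;> simp [Matrix.one_apply, h]
  | succ n ih =>
      rw [pow_succ, Matrix.mul_apply]
      exact Finset.sum_nonneg fun k _ => mul_nonneg (ih i k) (hP k j)

lemma pow_row_sum {P : Matrix S S ℝ} (hP : ∀ i, ∑ j, P i j = 1) (n : ℕ) (i : S) :
    ∑ j, (P ^ n) i j = 1 := by
  induction n generalizing i with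
  | zero => simp [Matrix.one_apply]
  | succ n ih =>
      simp only [pow_succ, Matrix.mul_apply]
      rw [Finset.sum_comm]
      calc ∑ k, ∑ j, (P ^ n) i k * P k j = ∑ k, (P ^ n) i k * ∑ j, P k j := by
            simp [Finset.mul_sum]
        _ = 1 := by simp only [hP, mul_one]; exact ih i

lemma row_bound {P : Matrix S S ℝ} (hnn : ∀ i j, 0 ≤ P i j) (hrow : ∀ i, ∑ j, P i j = 1)
    {v : S → ℝ} {C : ℝ} (hv : ∀ j, |v j| ≤ C) (i : S) : |P.mulVec v i| ≤ C := by
  have h1 : |P.mulVec v i| ≤ ∑ j, |P i j * v j| := by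
    simpa [Matrix.mulVec, dotProduct] using Finset.abs_sum_le_sum_abs (fun j => P i j * v j) Finset.univ
  refine h1.trans ?_
  calc ∑ j, |P i j * v j| ≤ ∑ j, P i j * C := by
        refine Finset.sum_le_sum fun j _ => ?_
        rw [abs_mul, abs_of_nonneg (hnn i j)]
        exact mul_le_mul_of_nonneg_left (hv j) (hnn i j)
    _ = C := by rw [← Finset.sum_mul, hrow, one_mul]

lemma mulVec_decomp (Q P : Matrix S S ℝ) (hQrow : ∀ i, ∑ j, Q i j = 1)
    (x : ℝ) (h r : S → ℝ) (i : S) :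
    Q.mulVec (fun j => x + h j - P.mulVec h j + r j) i
      = x + Q.mulVec h i - (Q * P).mulVec h i + Q.mulVec r i := by
  rw [← Matrix.mulVec_mulVec]
  simp only [Matrix.mulVec, dotProduct, mul_add, mul_sub, Finset.sum_add_distrib,
    Finset.sum_sub_distrib]
  rw [← Finset.sum_mul, hQrow, one_mul]

lemma telescope (P : Matrix S S ℝ) (hrow : ∀ i, ∑ j, P i j = 1)
    (x : ℝ) (h r : S → ℝ) (i : S) (n : ℕ) :
    ∑ t ∈ Finset.range n, (P ^ t).mulVec (fun j => x + h j - P.mulVec h j + r j) i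
      = n * x + h i - (P ^ n).mulVec h i + ∑ t ∈ Finset.range n, (P ^ t).mulVec r i := by
  have key : ∀ t, (P ^ t).mulVec (fun j => x + h j - P.mulVec h j + r j) i
      = x + ((P ^ t).mulVec h i - (P ^ (t + 1)).mulVec h i) + (P ^ t).mulVec r i := by
    intro t
    rw [mulVec_decomp (P ^ t) P (pow_row_sum hrow t) x h r i, ← pow_succ]
    ring
  calc ∑ t ∈ Finset.range n, (P ^ t).mulVec (fun j => x + h j - P.mulVec h j + r j) i
      = ∑ t ∈ Finset.range n,
          (x + ((P ^ t).mulVec h i - (P ^ (t + 1)).mulVec h i) + (P ^ t).mulVec r i) :=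
        Finset.sum_congr rfl fun t _ => key t
    _ = n * x + ((P ^ 0).mulVec h i - (P ^ n).mulVec h i)
          + ∑ t ∈ Finset.range n, (P ^ t).mulVec r i := by
        rw [Finset.sum_add_distrib, Finset.sum_add_distrib,
          Finset.sum_range_sub' (fun t => (P ^ t).mulVec h i) n,
          Finset.sum_const, Finset.card_range, nsmul_eq_mul]
    _ = n * x + h i - (P ^ n).mulVec h i + ∑ t ∈ Finset.range n, (P ^ t).mulVec r i := by
        rw [pow_zero, Matrix.one_mulVec]; ring

lemma window_lemma {P : Matrix S S ℝ} (hnn : ∀ i j, 0 ≤ P i j) (hrow : ∀ i, ∑ j, P i j = 1)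
    (hirr : MatIrreducible P) (z : S) :
    ∃ (m : ℕ) (ε : ℝ), 0 < m ∧ 0 < ε ∧
      ∀ t : ℕ, ε ≤ ∑ s ∈ Finset.range m, (P ^ (t + 1 + s)) z z := by
  classical
  have : Nonempty S := ⟨z⟩
  choose mf hmf hpos using fun j => hirr j z
  set m := Finset.univ.sup mf with hm
  have hmge : ∀ j, mf j ≤ m := fun j => Finset.le_sup (Finset.mem_univ j)
  have hm1 : 0 < m := lt_of_lt_of_le (hmf z) (hmge z)
  set ε := (Finset.univ.image fun j => (P ^ mf j) j z).min' (by simp) with hε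
  have hεpos : 0 < ε := by
    apply (Finset.lt_min'_iff _ _).2
    intro b hb
    simp only [Finset.mem_image] at hb
    obtain ⟨j, -, rfl⟩ := hb
    exact hpos j
  have hεle : ∀ j, ε ≤ (P ^ mf j) j z := fun j =>
    Finset.min'_le _ _ (Finset.mem_image_of_mem _ (Finset.mem_univ j))
  refine ⟨m, ε, hm1, hεpos, fun t => ?_⟩
  have hfib : ∀ j : S, (fun j => mf j - 1) j ∈ Finset.range m := by
    intro j
    simp only [Finset.mem_range]
    have := hmf j; have := hmge j; omega
  calc ε = ε * ∑ j, (P ^ t) z j := by rw [pow_row_sum hrow, mul_one]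
    _ = ∑ j, ε * (P ^ t) z j := Finset.mul_sum _ _ _
    _ = ∑ s ∈ Finset.range m, ∑ j ∈ Finset.univ.filter (fun j => mf j - 1 = s),
          ε * (P ^ t) z j := by
        rw [Finset.sum_fiberwise_of_maps_to (fun j _ => hfib j)]
    _ ≤ ∑ s ∈ Finset.range m, (P ^ (t + 1 + s)) z z := by
        refine Finset.sum_le_sum fun s _ => ?_
        have hdec : (P ^ (t + 1 + s)) z z
            = ∑ k, (P ^ t) z k * (P ^ (s + 1)) k z := by
          rw [show t + 1 + s = t + (s + 1) by ring, pow_add, Matrix.mul_apply]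
        rw [hdec]
        calc ∑ j ∈ Finset.univ.filter (fun j => mf j - 1 = s), ε * (P ^ t) z j
            ≤ ∑ j ∈ Finset.univ.filter (fun j => mf j - 1 = s),
                (P ^ t) z j * (P ^ (s + 1)) j z := by
              refine Finset.sum_le_sum fun j hj => ?_
              simp only [Finset.mem_filter] at hj
              have hs : s + 1 = mf j := by have := hmf j; omega
              rw [mul_comm]
              refine mul_le_mul_of_nonneg_left ?_ (pow_entry_nonneg hnn t z j)
              rw [hs]; exact hεle j
          _ ≤ ∑ k, (P ^ t) z k * (P ^ (s + 1)) k z := by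
              refine Finset.sum_le_sum_of_subset_of_nonneg (Finset.filter_subset _ _)
                fun k _ _ => mul_nonneg (pow_entry_nonneg hnn t z k)
                  (pow_entry_nonneg hnn (s + 1) k z)

lemma cum_lb {u : ℕ → ℝ} {m : ℕ} {ε : ℝ} (hu : ∀ t, 0 ≤ u t)
    (hwin : ∀ t : ℕ, ε ≤ ∑ s ∈ Finset.range m, u (t + 1 + s)) (q : ℕ) :
    (q : ℝ) * ε ≤ ∑ t ∈ Finset.range (m * q + 1), u t := by
  induction q with
  | zero => simpa using hu 0
  | succ q ih =>
      have hsplit : m * (q + 1) + 1 = (m * q + 1) + m := by ring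
      rw [hsplit, Finset.sum_range_add]
      have h2 : ε ≤ ∑ s ∈ Finset.range m, u (m * q + 1 + s) := hwin (m * q)
      push_cast
      have : (↑q + 1 : ℝ) * ε = ↑q * ε + ε := by ring
      rw [this]
      exact add_le_add ih h2

end MatAux

section AnalAux

variable {S : Type*} [Fintype S] [DecidableEq S]

lemma abs_le_sum_abs (h : S → ℝ) (j : S) : |h j| ≤ ∑ k, |h k| :=
  Finset.single_le_sum (fun k _ => abs_nonneg (h k)) (Finset.mem_univ j)

lemma avg_bounded {P : Matrix S S ℝ} (hnn : ∀ i j, 0 ≤ P i j) (hrow : ∀ i, ∑ j, P i j = 1)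
    (c : S → ℝ) (i : S) (n : ℕ) :
    |(n : ℝ)⁻¹ * ∑ t ∈ Finset.range n, (P ^ t).mulVec c i| ≤ ∑ k, |c k| := by
  set Cc := ∑ k, |c k| with hCc
  have hCcnn : 0 ≤ Cc := Finset.sum_nonneg fun k _ => abs_nonneg _
  rcases Nat.eq_zero_or_pos n with rfl | hn
  · simpa using hCcnn
  have hnpos : (0:ℝ) < n := by exact_mod_cast hn
  have h1 : |∑ t ∈ Finset.range n, (P ^ t).mulVec c i| ≤ n * Cc := by
    calc |∑ t ∈ Finset.range n, (P ^ t).mulVec c i|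
        ≤ ∑ t ∈ Finset.range n, |(P ^ t).mulVec c i| :=
          Finset.abs_sum_le_sum_abs _ _
      _ ≤ ∑ _t ∈ Finset.range n, Cc :=
          Finset.sum_le_sum fun t _ =>
            row_bound (pow_entry_nonneg hnn t) (pow_row_sum hrow t) (abs_le_sum_abs c) i
      _ = n * Cc := by rw [Finset.sum_const, Finset.card_range, nsmul_eq_mul]
  rw [abs_mul, abs_of_nonneg (inv_nonneg.2 hnpos.le)]
  calc (n:ℝ)⁻¹ * |∑ t ∈ Finset.range n, (P ^ t).mulVec c i| ≤ (n:ℝ)⁻¹ * (n * Cc) := by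
        exact mul_le_mul_of_nonneg_left h1 (inv_nonneg.2 hnpos.le)
    _ = Cc := by field_simp
  
lemma avg_lb {P : Matrix S S ℝ} (hnn : ∀ i j, 0 ≤ P i j) (hrow : ∀ i, ∑ j, P i j = 1)
    (x : ℝ) (h c : S → ℝ) (hc : ∀ j, x + h j - P.mulVec h j ≤ c j) (i : S) :
    x ≤ Filter.limsup
      (fun n : ℕ => (n:ℝ)⁻¹ * ∑ t ∈ Finset.range n, (P ^ t).mulVec c i) Filter.atTop := by
  set f := fun n : ℕ => (n:ℝ)⁻¹ * ∑ t ∈ Finset.range n, (P ^ t).mulVec c i with hf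
  set C := ∑ k, |h k| with hC
  have hCnn : 0 ≤ C := Finset.sum_nonneg fun k _ => abs_nonneg _
  have hbdd : Filter.IsBoundedUnder (· ≤ ·) Filter.atTop f :=
    Filter.isBoundedUnder_of ⟨∑ k, |c k|, fun n => (abs_le.1 (avg_bounded hnn hrow c i n)).2⟩
  have key : ∀ n : ℕ, 1 ≤ n → x - 2 * C * (n:ℝ)⁻¹ ≤ f n := by
    intro n hn
    have hnpos : (0:ℝ) < n := by exact_mod_cast hn
    set r := fun j => c j - (x + h j - P.mulVec h j) with hr
    have hceq : c = fun j => x + h j - P.mulVec h j + r j := by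
      funext j; simp only [hr]; ring
    have htel : ∑ t ∈ Finset.range n, (P ^ t).mulVec c i
        = n * x + h i - (P ^ n).mulVec h i + ∑ t ∈ Finset.range n, (P ^ t).mulVec r i := by
      conv_lhs => rw [hceq]
      exact telescope P hrow x h r i n
    have hrs : 0 ≤ ∑ t ∈ Finset.range n, (P ^ t).mulVec r i := by
      refine Finset.sum_nonneg fun t _ => Finset.sum_nonneg fun j _ => ?_
      exact mul_nonneg (pow_entry_nonneg hnn t i j) (by simp only [hr]; linarith [hc j])
    have hPh : |(P ^ n).mulVec h i| ≤ C :=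
      row_bound (pow_entry_nonneg hnn n) (pow_row_sum hrow n) (abs_le_sum_abs h) i
    have hhi : |h i| ≤ C := abs_le_sum_abs h i
    have hlow : n * x - 2 * C ≤ ∑ t ∈ Finset.range n, (P ^ t).mulVec c i := by
      rw [htel]
      have h1 := (abs_le.1 hPh).2
      have h2 := (abs_le.1 hhi).1
      linarith
    have : (n:ℝ)⁻¹ * (n * x - 2 * C) ≤ f n := by
      rw [hf]
      exact mul_le_mul_of_nonneg_left hlow (inv_nonneg.2 hnpos.le)
    calc x - 2 * C * (n:ℝ)⁻¹ = (n:ℝ)⁻¹ * (n * x - 2 * C) := by field_simp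
      _ ≤ f n := this
  refine le_of_forall_pos_le_add fun ε hε => ?_
  have hev : ∀ᶠ n : ℕ in Filter.atTop, x - ε ≤ f n := by
    have ht : Filter.Tendsto (fun n : ℕ => 2 * C * (n:ℝ)⁻¹) Filter.atTop (nhds 0) := by
      simpa using tendsto_inv_atTop_nhds_zero_nat.const_mul (2 * C)
    filter_upwards [ht.eventually_lt_const hε, Filter.eventually_ge_atTop 1] with n h1 h2
    have := key n h2
    linarith
  have := Filter.le_limsup_of_frequently_le hev.frequently hbdd
  linarith

lemma delta_eq_zero {P : Matrix S S ℝ} (hnn : ∀ i j, 0 ≤ P i j) (hrow : ∀ i, ∑ j, P i j = 1)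
    (hirr : MatIrreducible P) (z : S) (x δ : ℝ) (h c : S → ℝ) (hz : h z = 0)
    (hc : c = fun j => x + h j - P.mulVec h j + (if j = z then δ else 0))
    (hlim : Filter.limsup
      (fun n : ℕ => (n:ℝ)⁻¹ * ∑ t ∈ Finset.range n, (P ^ t).mulVec c z) Filter.atTop = x) :
    δ = 0 := by
  set f := fun n : ℕ => (n:ℝ)⁻¹ * ∑ t ∈ Finset.range n, (P ^ t).mulVec c z with hf
  obtain ⟨m, ε, hm, hε, hwin⟩ := window_lemma hnn hrow hirr z
  set u := fun t : ℕ => (P ^ t) z z with hu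
  have hun : ∀ t, 0 ≤ u t := fun t => pow_entry_nonneg hnn t z z
  set r := fun j => if j = z then δ else 0 with hr
  have hrz : ∀ t, (P ^ t).mulVec r z = u t * δ := by
    intro t
    simp only [Matrix.mulVec, dotProduct, hr, mul_ite, mul_zero]
    rw [Finset.sum_ite_eq' Finset.univ z fun j => (P ^ t) z j * δ]
    simp [hu]
  have htel : ∀ n : ℕ,
      ∑ t ∈ Finset.range n, (P ^ t).mulVec c z
        = n * x - (P ^ n).mulVec h z + δ * ∑ t ∈ Finset.range n, u t := by
    intro n
    have := telescope P hrow x h r z n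
    rw [← hc] at this
    rw [this, hz]
    have : ∑ t ∈ Finset.range n, (P ^ t).mulVec r z = δ * ∑ t ∈ Finset.range n, u t := by
      rw [Finset.mul_sum]
      exact Finset.sum_congr rfl fun t _ => by rw [hrz t, mul_comm]
    rw [this]; ring
  set C := ∑ k, |h k| with hC
  have hCnn : 0 ≤ C := Finset.sum_nonneg fun k _ => abs_nonneg _
  have hPh : ∀ n, |(P ^ n).mulVec h z| ≤ C := fun n =>
    row_bound (pow_entry_nonneg hnn n) (pow_row_sum hrow n) (abs_le_sum_abs h) z
  set L := ε / (2 * m) with hL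
  have hmR : (0:ℝ) < m := by exact_mod_cast hm
  have hLpos : 0 < L := div_pos hε (by positivity)
  -- eventual lower bound on the occupation average
  have hocc : ∀ n : ℕ, 2 * m ≤ n → L ≤ (n:ℝ)⁻¹ * ∑ t ∈ Finset.range n, u t := by
    intro n hn
    have hn1 : 1 ≤ n := by omega
    have hnpos : (0:ℝ) < n := by exact_mod_cast hn1
    set q := (n - 1) / m with hq
    have hq1 : 1 ≤ q := by
      rw [hq]; exact Nat.one_le_div_iff hm |>.2 (by omega)
    have hdm : m * q + (n - 1) % m = n - 1 := by rw [hq]; exact Nat.div_add_mod _ _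
    have hmod : (n - 1) % m < m := Nat.mod_lt _ hm
    have hmq : m * q + 1 ≤ n := by omega
    have hmmq : m ≤ m * q := Nat.le_mul_of_pos_right m (by omega)
    have hn2mq : n ≤ 2 * m * q := by
      have h2 : 2 * m * q = m * q + m * q := by ring
      omega
    have hcum : (q : ℝ) * ε ≤ ∑ t ∈ Finset.range (m * q + 1), u t := cum_lb hun hwin q
    have hmono : ∑ t ∈ Finset.range (m * q + 1), u t ≤ ∑ t ∈ Finset.range n, u t :=
      Finset.sum_le_sum_of_subset_of_nonneg
        (Finset.range_subset_range.2 hmq) (fun t _ _ => hun t)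
    have hqR : (0:ℝ) < q := by exact_mod_cast hq1
    have hkey : L * n ≤ (q : ℝ) * ε := by
      rw [hL]
      have hcast : (n:ℝ) ≤ 2 * m * q := by exact_mod_cast hn2mq
      calc ε / (2 * m) * n ≤ ε / (2 * m) * (2 * m * q) := by
            refine mul_le_mul_of_nonneg_left hcast (by positivity)
        _ = (q:ℝ) * ε := by field_simp
    have hfin : L * n ≤ ∑ t ∈ Finset.range n, u t := hkey.trans (hcum.trans hmono)
    calc L = (n:ℝ)⁻¹ * (L * n) := by field_simp
      _ ≤ (n:ℝ)⁻¹ * ∑ t ∈ Finset.range n, u t :=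
        mul_le_mul_of_nonneg_left hfin (by positivity)
  -- boundedness of f
  have hbddle : Filter.IsBoundedUnder (· ≤ ·) Filter.atTop f :=
    Filter.isBoundedUnder_of ⟨∑ k, |c k|, fun n => (abs_le.1 (avg_bounded hnn hrow c z n)).2⟩
  have hbddge : Filter.IsCoboundedUnder (· ≤ ·) Filter.atTop f :=
    Filter.isCoboundedUnder_le_of_le Filter.atTop
      (x := -(∑ k, |c k|)) fun n => (abs_le.1 (avg_bounded hnn hrow c z n)).1
  have ht0 : Filter.Tendsto (fun n : ℕ => C * (n:ℝ)⁻¹) Filter.atTop (nhds 0) := by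
    simpa using tendsto_inv_atTop_nhds_zero_nat.const_mul C
  by_contra hδ
  rcases lt_or_gt_of_ne hδ with hneg | hpos
  · -- δ < 0 : f n ≤ x + C/n + δ L eventually, limsup < x
    have hev : ∀ᶠ n : ℕ in Filter.atTop, f n ≤ x + C * (n:ℝ)⁻¹ + δ * L := by
      filter_upwards [Filter.eventually_ge_atTop (2 * m), Filter.eventually_ge_atTop 1]
        with n hn hn1
      have hnpos : (0:ℝ) < n := by exact_mod_cast hn1
      have hocc' := hocc n hn
      have hδU : δ * ((n:ℝ)⁻¹ * ∑ t ∈ Finset.range n, u t) ≤ δ * L := by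
        exact mul_le_mul_of_nonpos_left hocc' hneg.le
      have hPh' := (abs_le.1 (hPh n)).2
      have : f n = x + (n:ℝ)⁻¹ * (-(P ^ n).mulVec h z)
          + δ * ((n:ℝ)⁻¹ * ∑ t ∈ Finset.range n, u t) := by
        rw [hf]; simp only []; rw [htel n]
        field_simp
        ring
      rw [this]
      have h2 : (n:ℝ)⁻¹ * (-(P ^ n).mulVec h z) ≤ (n:ℝ)⁻¹ * C := by
        refine mul_le_mul_of_nonneg_left (by linarith [(abs_le.1 (hPh n)).1]) (by positivity)
      linarith [mul_comm C (n:ℝ)⁻¹]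
    have h1 : Filter.limsup f Filter.atTop ≤ x + δ * L / 2 := by
      have hev2 : ∀ᶠ n : ℕ in Filter.atTop, f n ≤ x + δ * L / 2 := by
        have ht : Filter.Tendsto (fun n : ℕ => C * (n:ℝ)⁻¹) Filter.atTop (nhds 0) := ht0
        have hlt : (0:ℝ) < -(δ * L) / 2 := by nlinarith
        filter_upwards [hev, ht.eventually_lt_const hlt] with n h1 h2
        linarith
      exact Filter.limsup_le_of_le hbddge hev2
    rw [hf] at h1
    rw [hlim] at h1
    nlinarith
  · -- δ > 0 : f n ≥ x - C/n + δ L eventually, limsup > x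
    have hev : ∀ᶠ n : ℕ in Filter.atTop, x + δ * L / 2 ≤ f n := by
      have hlt : (0:ℝ) < δ * L / 2 := by positivity
      filter_upwards [Filter.eventually_ge_atTop (2 * m), Filter.eventually_ge_atTop 1,
        ht0.eventually_lt_const hlt] with n hn hn1 hsm
      have hnpos : (0:ℝ) < n := by exact_mod_cast hn1
      have hocc' := hocc n hn
      have hδU : δ * L ≤ δ * ((n:ℝ)⁻¹ * ∑ t ∈ Finset.range n, u t) :=
        mul_le_mul_of_nonneg_left hocc' hpos.le
      have : f n = x + (n:ℝ)⁻¹ * (-(P ^ n).mulVec h z)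
          + δ * ((n:ℝ)⁻¹ * ∑ t ∈ Finset.range n, u t) := by
        rw [hf]; simp only []; rw [htel n]
        field_simp
        ring
      rw [this]
      have h2 : -(C * (n:ℝ)⁻¹) ≤ (n:ℝ)⁻¹ * (-(P ^ n).mulVec h z) := by
        rw [mul_comm C]
        refine neg_le.1 ?_
        rw [← mul_neg, neg_neg]
        exact mul_le_mul_of_nonneg_left (abs_le.1 (hPh n)).2 (by positivity)
      linarith
    have h1 : x + δ * L / 2 ≤ Filter.limsup f Filter.atTop :=
      Filter.le_limsup_of_frequently_le hev.frequently hbddle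
    rw [hf, hlim] at h1
    nlinarith

end AnalAux

/-- in the setting of STATEMENT 6, if `g(d¹) = g(d)` then `d¹` is average cost
optimal, and the pair `(g(d), h)` with `h_j = ∑_{k ∈ Δ(root,j)} y k` (so `h_root = 0`)
satisfies the average cost optimality equations. -/
theorem stmt7 {S A : Type*} [Fintype S] [DecidableEq S] [Fintype A] [Nonempty A]
    (T : SFTree S) (M : MDP S A)
    (hsf : M.IsSkipFree T) (hrec : IsRecurrentModel M)
    (h00 : ∀ a : A, M.p T.root a T.root < 1)
    (hpar : ∀ i, i ≠ T.root → ∀ a : A, 0 < M.p i a (T.parent i))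
    (d : S → A) (x : ℝ) (hx : x = M.avgCost d T.root)
    (y : S → ℝ) (aSel : S → A)
    (hy : ∀ i, i ≠ T.root →
      y i = ⨅ a : A, (M.c i a - x + ∑ k ∈ T.desc i, M.ptail T i a k * y k)
          / M.p i a (T.parent i))
    (ha : ∀ i, i ≠ T.root →
      (M.c i (aSel i) - x + ∑ k ∈ T.desc i, M.ptail T i (aSel i) k * y k)
          / M.p i (aSel i) (T.parent i) = y i)
    (d1 : S → A)
    (hd1root : (M.c T.root (d1 T.root) - x
          + ∑ k ∈ T.desc T.root, M.ptail T T.root (d1 T.root) k * y k)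
          / (1 - M.p T.root (d1 T.root) T.root)
        = ⨅ a : A, (M.c T.root a - x + ∑ k ∈ T.desc T.root, M.ptail T T.root a k * y k)
          / (1 - M.p T.root a T.root))
    (hd1 : ∀ i, i ≠ T.root → d1 i = aSel i)
    (heq : M.avgCost d1 T.root = M.avgCost d T.root) :
    (M.avgCost d1 T.root = ⨅ d' : S → A, M.avgCost d' T.root)
    ∧ (∑ k ∈ T.delta T.root T.root, y k) = 0
    ∧ (∀ i, (∑ k ∈ T.delta T.root i, y k)
        = ⨅ a : A, (M.c i a - x + ∑ j, M.p i a j * (∑ k ∈ T.delta T.root j, y k))) := by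
  classical
  have hroot0 : (∑ k ∈ T.delta T.root T.root, y k) = 0 := by
    rw [T.delta_root_root]; exact Finset.sum_empty
  -- positivity of denominators
  have hp00 : ∀ a : A, 0 < 1 - M.p T.root a T.root := fun a => by linarith [h00 a]
  -- minimality of y
  have hyle : ∀ i, i ≠ T.root → ∀ a : A,
      y i ≤ (M.c i a - x + ∑ k ∈ T.desc i, M.ptail T i a k * y k) / M.p i a (T.parent i) := by
    intro i hi a
    rw [hy i hi]
    exact ciInf_le ((Set.finite_range _).bddBelow) a
  -- the key algebraic identity at non-root states
  have hEne : ∀ i, i ≠ T.root → ∀ a : A,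
      M.c i a - x + (∑ j, M.p i a j * (∑ k ∈ T.delta T.root j, y k))
        = (∑ k ∈ T.delta T.root i, y k)
          + M.p i a (T.parent i)
            * ((M.c i a - x + ∑ k ∈ T.desc i, M.ptail T i a k * y k)
                / M.p i a (T.parent i) - y i) := by
    intro i hi a
    have hp := hpar i hi a
    have hne : M.p i a (T.parent i) ≠ 0 := hp.ne'
    have hsplit : (∑ k ∈ T.delta T.root i, y k)
        = (∑ k ∈ T.delta T.root (T.parent i), y k) + y i := by
      rw [T.delta_root_eq_insert hi, Finset.sum_insert (T.notMem_delta_root_parent hi)]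
      ring
    rw [M.Edecomp T hsf y hi a]
    have hmul : M.p i a (T.parent i)
        * ((M.c i a - x + ∑ k ∈ T.desc i, M.ptail T i a k * y k)
            / M.p i a (T.parent i) - y i)
        = (M.c i a - x + ∑ k ∈ T.desc i, M.ptail T i a k * y k)
            - M.p i a (T.parent i) * y i := by
      field_simp
    rw [hmul, hsplit]
    ring
  -- the key algebraic identity at the root
  have hEroot : ∀ a : A,
      M.c T.root a - x + (∑ j, M.p T.root a j * (∑ k ∈ T.delta T.root j, y k))
        = (1 - M.p T.root a T.root)
          * ((M.c T.root a - x + ∑ k ∈ T.desc T.root, M.ptail T T.root a k * y k)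
              / (1 - M.p T.root a T.root)) := by
    intro a
    rw [M.Edecomp_root T y a]
    field_simp [(hp00 a).ne']
  -- the cost identity of d1
  set δ : ℝ := M.c T.root (d1 T.root) - x
      + ∑ k ∈ T.desc T.root, M.ptail T T.root (d1 T.root) k * y k with hδdef
  have hd1cost : M.cvec d1 = fun j => x + (∑ k ∈ T.delta T.root j, y k)
      - (M.Pmat d1).mulVec (fun j' => ∑ k ∈ T.delta T.root j', y k) j
      + (if j = T.root then δ else 0) := by
    funext j
    have hmv : (M.Pmat d1).mulVec (fun j' => ∑ k ∈ T.delta T.root j', y k) j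
        = ∑ j', M.p j (d1 j) j' * (∑ k ∈ T.delta T.root j', y k) := by
      simp [MDP.Pmat, Matrix.mulVec, dotProduct]
    rw [hmv]
    by_cases hj : j = T.root
    · subst hj
      rw [if_pos rfl, M.Edecomp_root T y (d1 T.root), hroot0, hδdef]
      simp only [MDP.cvec]
      ring
    · simp only [if_neg hj, add_zero]
      have h1 := hEne j hj (aSel j)
      rw [ha j hj] at h1
      simp only [sub_self, mul_zero, add_zero] at h1
      simp only [MDP.cvec, hd1 j hj]
      linarith [h1]
  -- stochasticity of policy matrices
  have hnnP : ∀ d' : S → A, ∀ i j, 0 ≤ (M.Pmat d') i j := fun d' i j => M.p_nonneg i (d' i) j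
  have hrowP : ∀ d' : S → A, ∀ i, ∑ j, (M.Pmat d') i j = 1 := fun d' i => M.p_sum_one i (d' i)
  -- δ = 0
  have hlim1 : M.avgCost d1 T.root = x := by rw [heq, ← hx]
  have hδ0 : δ = 0 := by
    refine delta_eq_zero (hnnP d1) (hrowP d1) (hrec d1) T.root x δ
      (fun j => ∑ k ∈ T.delta T.root j, y k) (M.cvec d1) hroot0 ?_ ?_
    · exact hd1cost
    · exact hlim1
  -- nonnegativity at the root
  have hG1 : (M.c T.root (d1 T.root) - x
      + ∑ k ∈ T.desc T.root, M.ptail T T.root (d1 T.root) k * y k)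
      / (1 - M.p T.root (d1 T.root) T.root) = 0 := by
    rw [← hδdef, hδ0, zero_div]
  have hGnn : ∀ a : A, 0 ≤ (M.c T.root a - x
      + ∑ k ∈ T.desc T.root, M.ptail T T.root a k * y k)
      / (1 - M.p T.root a T.root) := by
    intro a
    have h1 : (0:ℝ) = ⨅ a : A, (M.c T.root a - x
        + ∑ k ∈ T.desc T.root, M.ptail T T.root a k * y k)
        / (1 - M.p T.root a T.root) := by rw [← hd1root, hG1]
    rw [h1]
    exact ciInf_le ((Set.finite_range _).bddBelow) a
  -- PART 3 : the optimality equations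
  have part3 : ∀ i, (∑ k ∈ T.delta T.root i, y k)
      = ⨅ a : A, (M.c i a - x + ∑ j, M.p i a j * (∑ k ∈ T.delta T.root j, y k)) := by
    intro i
    by_cases hi : i = T.root
    · subst hi
      rw [hroot0]
      refine le_antisymm (le_ciInf fun a => ?_) ?_
      · rw [hEroot a]
        exact mul_nonneg (hp00 a).le (hGnn a)
      · refine le_trans (ciInf_le ((Set.finite_range _).bddBelow) (d1 T.root)) ?_
        rw [hEroot (d1 T.root), hG1, mul_zero]
    · refine le_antisymm (le_ciInf fun a => ?_) ?_
      · rw [hEne i hi a]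
        have h2 : 0 ≤ M.p i a (T.parent i)
            * ((M.c i a - x + ∑ k ∈ T.desc i, M.ptail T i a k * y k)
                / M.p i a (T.parent i) - y i) :=
          mul_nonneg (hpar i hi a).le (by linarith [hyle i hi a])
        linarith
      · refine le_trans (ciInf_le ((Set.finite_range _).bddBelow) (aSel i)) ?_
        rw [hEne i hi (aSel i), ha i hi]
        simp
  -- PART 1 : optimality
  have hlb : ∀ d' : S → A, x ≤ M.avgCost d' T.root := by
    intro d'
    have hc' : ∀ j, x + (∑ k ∈ T.delta T.root j, y k)
        - (M.Pmat d').mulVec (fun j' => ∑ k ∈ T.delta T.root j', y k) j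
        ≤ M.cvec d' j := by
      intro j
      have hmv : (M.Pmat d').mulVec (fun j' => ∑ k ∈ T.delta T.root j', y k) j
          = ∑ j', M.p j (d' j) j' * (∑ k ∈ T.delta T.root j', y k) := by
        simp [MDP.Pmat, Matrix.mulVec, dotProduct]
      have h1 : (∑ k ∈ T.delta T.root j, y k)
          ≤ M.c j (d' j) - x + ∑ j', M.p j (d' j) j' * (∑ k ∈ T.delta T.root j', y k) := by
        rw [part3 j]
        exact ciInf_le ((Set.finite_range _).bddBelow) (d' j)
      rw [hmv]
      simp only [MDP.cvec]
      linarith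
    exact avg_lb (hnnP d') (hrowP d') x _ (M.cvec d') hc' T.root
  refine ⟨?_, hroot0, part3⟩
  rw [hlim1]
  refine le_antisymm (le_ciInf fun d' => hlb d') ?_
  have hbdd : BddBelow (Set.range fun d' : S → A => M.avgCost d' T.root) := by
    refine ⟨x, ?_⟩
    rintro v ⟨d', rfl⟩
    exact hlb d'
  calc (⨅ d' : S → A, M.avgCost d' T.root) ≤ M.avgCost d1 T.root := ciInf_le hbdd d1
    _ = x := hlim1
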